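/- arXiv:1908.10505 — 4 statements merged into one kernel-verified Lean document; each statement's English description precedes it below -/
import Mathlib

section
/- Let V n = (2^(2+n) + (-1)^(1+n) + 9) / 6 and S n = (9 + 23*(-1)^n + 2^(2+n) - 6*n*(-1)^n) / 36 (rational-valued). Then for all natural numbers n, k with k ≤ n and n ≥ 1, |S (n-k) / (V n - 2) - (1/6) * 2^(-k)| ≤ (n+5) / 2^(n+1). -/
set_option maxHeartbeats 1600000 in
theorem stmt_3 (V S : ℕ → ℚ)
    (hV : ∀ n : ℕ, V n = (2 ^ (2 + n) + (-1 : ℚ) ^ (1 + n) + 9) / 6)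
    (hS : ∀ n : ℕ, S n = (9 + 23 * (-1 : ℚ) ^ n + 2 ^ (2 + n) - 6 * n * (-1 : ℚ) ^ n) / 36) :
    ∀ n k : ℕ, k ≤ n → 1 ≤ n →
      |S (n - k) / (V n - 2) - (1 / 6) * (2 : ℚ) ^ (-(k : ℤ))| ≤ (n + 5) / 2 ^ (n + 1) := by
  intro n k hk hn
  have hmk : n - k + k = n := Nat.sub_add_cancel hk
  set m := n - k with hmdef
  have hx0 : (0:ℚ) < 2 ^ n := by positivity
  have hy0 : (0:ℚ) < 2 ^ m := by positivity
  have hx2 : (2:ℚ) ≤ 2 ^ n := by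
    calc (2:ℚ) = 2 ^ 1 := by norm_num
    _ ≤ 2 ^ n := by exact pow_le_pow_right₀ (by norm_num) hn
  have hxy : (2:ℚ) ^ m * 2 ^ k = 2 ^ n := by rw [← pow_add, hmk]
  have hzp : (2:ℚ) ^ (-(k:ℤ)) = 2 ^ m / 2 ^ n := by
    rw [zpow_neg, zpow_natCast, eq_div_iff hx0.ne', ← hxy]
    field_simp
  rw [hS, hV, hzp]
  have e1 : (2:ℚ) ^ (2 + n) = 4 * 2 ^ n := by rw [pow_add]; norm_num
  have e2 : (2:ℚ) ^ (2 + m) = 4 * 2 ^ m := by rw [pow_add]; norm_num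
  have e3 : ((-1:ℚ)) ^ (1 + n) = -((-1:ℚ)) ^ n := by rw [pow_add]; ring
  rw [e1, e2, e3]
  have hε : ((-1:ℚ)) ^ n = 1 ∨ ((-1:ℚ)) ^ n = -1 := neg_one_pow_eq_or ℚ n
  have hb0 : (0:ℚ) < 4 * 2 ^ n - (-1:ℚ) ^ n - 3 := by
    rcases hε with h | h <;> rw [h] <;> nlinarith
  have hb : ((4 * 2 ^ n + -((-1:ℚ)) ^ n + 9) / 6 - 2) = (4 * 2 ^ n - (-1:ℚ) ^ n - 3) / 6 := by
    ring
  rw [hb]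
  have key : (9 + 23 * (-1:ℚ) ^ m + 4 * 2 ^ m - 6 * (m:ℚ) * (-1:ℚ) ^ m) / 36 /
        ((4 * 2 ^ n - (-1:ℚ) ^ n - 3) / 6) - 1 / 6 * (2 ^ m / 2 ^ n)
      = (2 ^ n * (9 + 23 * (-1:ℚ) ^ m - 6 * (m:ℚ) * (-1:ℚ) ^ m) + 2 ^ m * ((-1:ℚ) ^ n + 3)) /
        (6 * 2 ^ n * (4 * 2 ^ n - (-1:ℚ) ^ n - 3)) := by
    field_simp
    ring
  rw [key]
  have hd0 : (0:ℚ) < 6 * 2 ^ n * (4 * 2 ^ n - (-1:ℚ) ^ n - 3) := by positivity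
  rw [abs_div, abs_of_pos hd0, div_le_iff₀ hd0]
  have hE : ((n:ℚ) + 5) / 2 ^ (n + 1) * (6 * 2 ^ n * (4 * 2 ^ n - (-1:ℚ) ^ n - 3))
      = 3 * ((n:ℚ) + 5) * (4 * 2 ^ n - (-1:ℚ) ^ n - 3) := by
    rw [pow_succ]
    field_simp
    ring
  rw [hE]
  have hn' : (1:ℚ) ≤ (n:ℚ) := by exact_mod_cast hn
  have hn0 : (0:ℚ) ≤ (n:ℚ) := by positivity
  have hm0 : (0:ℚ) ≤ (m:ℚ) := by positivity
  have hnx : (n:ℚ) * 2 ≤ (n:ℚ) * 2 ^ n := by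
    exact mul_le_mul_of_nonneg_left hx2 hn0
  rcases Nat.eq_zero_or_pos k with hk0 | hk1
  · -- k = 0 : m = n
    have hmn : m = n := by omega
    rw [hmn]
    rcases hε with h | h <;> rw [h, abs_le] <;> constructor <;> nlinarith
  · -- k ≥ 1
    have h2k : (2:ℚ) ≤ 2 ^ k := by
      calc (2:ℚ) = 2 ^ 1 := by norm_num
      _ ≤ 2 ^ k := by exact pow_le_pow_right₀ (by norm_num) hk1
    have h2 : 2 * (2:ℚ) ^ m ≤ 2 ^ n := by
      calc 2 * (2:ℚ) ^ m ≤ 2 ^ k * 2 ^ m := mul_le_mul_of_nonneg_right h2k hy0.le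
      _ = 2 ^ n := by rw [mul_comm]; exact hxy
    have hm1 : (m:ℚ) + 1 ≤ (n:ℚ) := by
      have : m + 1 ≤ n := by omega
      exact_mod_cast this
    have hmx : ((m:ℚ) + 1) * 2 ^ n ≤ (n:ℚ) * 2 ^ n :=
      mul_le_mul_of_nonneg_right hm1 hx0.le
    have hη : ((-1:ℚ)) ^ m = 1 ∨ ((-1:ℚ)) ^ m = -1 := neg_one_pow_eq_or ℚ m
    rcases hε with h | h <;> rcases hη with h' | h' <;> rw [h, h', abs_le] <;>
      constructor <;> nlinarith
end

section
/- Let ρ be a real number with ρ^3 - ρ^2 - 2ρ + 1 = 0 (so in particular ρ ≠ 0, ρ ≠ ±1), and let S n = (9 + 23*(-1)^n + 2^(2+n) - 6*n*(-1)^n) / 36. Then for all m < n, ∑_{k=m+1}^{n} S (n-k) * ρ^k = (1/36) * ρ^(m+1) * ( 2^(n-m+2) * ρ * (ρ+1) + (5ρ^2 - 4ρ - 18) * (-1)^(n-m) + 6ρ*(2-ρ) * (-1)^(n-m) * (n-m) + 9 * (2 - ρ^2) ). -/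
lemma stmt_4_aux (ρ : ℝ) (hρ : ρ ^ 3 - ρ ^ 2 - 2 * ρ + 1 = 0) (S : ℕ → ℝ)
    (hS : ∀ n : ℕ, S n = (9 + 23 * (-1 : ℝ) ^ n + 2 ^ (2 + n) - 6 * n * (-1 : ℝ) ^ n) / 36) :
    ∀ d m n : ℕ, n = m + d + 1 →
      ∑ k ∈ Finset.Icc (m + 1) n, S (n - k) * ρ ^ k =
        (1 / 36) * ρ ^ (m + 1) *
          (2 ^ (d + 3) * ρ * (ρ + 1) + (5 * ρ ^ 2 - 4 * ρ - 18) * (-1 : ℝ) ^ (d + 1)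
            + 6 * ρ * (2 - ρ) * (-1 : ℝ) ^ (d + 1) * ((d : ℝ) + 1)
            + 9 * (2 - ρ ^ 2)) := by
  intro d
  induction d with
  | zero =>
    intro m n hn
    subst hn
    rw [Finset.Icc_self, Finset.sum_singleton]
    have h0 : m + 0 + 1 - (m + 1) = 0 := by omega
    rw [h0, hS 0]
    norm_num
    ring
  | succ d ih =>
    intro m n hn
    subst hn
    have hle : m + 1 ≤ m + (d + 1) + 1 := by omega
    rw [← Finset.Ioc_insert_left hle, Finset.sum_insert (by simp),
      ← Finset.Icc_add_one_left_eq_Ioc]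
    have hsub : m + (d + 1) + 1 - (m + 1) = d + 1 := by omega
    rw [hsub, ih (m + 1) (m + (d + 1) + 1) (by omega), hS (d + 1)]
    have e1 : m + 1 + 1 = m + 2 := by omega
    rw [e1]
    have p1 : (2 : ℝ) ^ (2 + (d + 1)) = 8 * 2 ^ d := by
      have : 2 + (d + 1) = d + 3 := by omega
      rw [this, pow_add]; norm_num [mul_comm]
    have p2 : (2 : ℝ) ^ (d + 3) = 8 * 2 ^ d := by rw [pow_add]; norm_num [mul_comm]
    have p3 : (2 : ℝ) ^ (d + 1 + 3) = 16 * 2 ^ d := by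
      rw [show d + 1 + 3 = d + 4 from by omega, pow_add]; norm_num [mul_comm]
    rw [p1, p2, p3]
    push_cast
    rcases Nat.even_or_odd d with he | ho
    · have q1 : (-1 : ℝ) ^ (d + 1) = -1 := Odd.neg_one_pow (by exact he.add_one)
      have q2 : (-1 : ℝ) ^ (d + 1 + 1) = 1 := Even.neg_one_pow (by
        rcases he with ⟨k, hk⟩; exact ⟨k + 1, by omega⟩)
      rw [q1, q2]
      linear_combination (ρ ^ (m + 1) * (2 / 9 * 2 ^ d - 2 / 9 + (d : ℝ) / 6)) * hρ
    · have q1 : (-1 : ℝ) ^ (d + 1) = 1 := Even.neg_one_pow (by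
        rcases ho with ⟨k, hk⟩; exact ⟨k + 1, by omega⟩)
      have q2 : (-1 : ℝ) ^ (d + 1 + 1) = -1 := Odd.neg_one_pow (by
        rcases ho with ⟨k, hk⟩; exact ⟨k + 1, by omega⟩)
      rw [q1, q2]
      linear_combination (ρ ^ (m + 1) * (2 / 9 * 2 ^ d - 5 / 18 - (d : ℝ) / 6)) * hρ

theorem stmt_4 (ρ : ℝ) (hρ : ρ ^ 3 - ρ ^ 2 - 2 * ρ + 1 = 0) (S : ℕ → ℝ)
    (hS : ∀ n : ℕ, S n = (9 + 23 * (-1 : ℝ) ^ n + 2 ^ (2 + n) - 6 * n * (-1 : ℝ) ^ n) / 36) :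
    ∀ m n : ℕ, m < n →
      ∑ k ∈ Finset.Icc (m + 1) n, S (n - k) * ρ ^ k =
        (1 / 36) * ρ ^ (m + 1) *
          (2 ^ (n - m + 2) * ρ * (ρ + 1) + (5 * ρ ^ 2 - 4 * ρ - 18) * (-1 : ℝ) ^ (n - m)
            + 6 * ρ * (2 - ρ) * (-1 : ℝ) ^ (n - m) * ((n - m : ℕ) : ℝ)
            + 9 * (2 - ρ ^ 2)) := by
  intro m n hmn
  obtain ⟨d, hd⟩ : ∃ d, n = m + d + 1 := ⟨n - m - 1, by omega⟩
  have hnm : n - m = d + 1 := by omega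
  rw [hnm]
  have : d + 1 + 2 = d + 3 := by omega
  rw [this]
  push_cast
  exact stmt_4_aux ρ hρ S hS d m n hd
end

section
/- Let ρ be a real root of ρ^3 - ρ^2 - 2ρ + 1 = 0 (all such roots satisfy |ρ| < 2), let S n = (9 + 23*(-1)^n + 2^(2+n) - 6*n*(-1)^n)/36 and V n = (2^(2+n) + (-1)^(1+n) + 9)/6. Then for each fixed m, the limit as n → ∞ of (1/(V n - 2)) * ∑_{k=m+1}^{n} S (n-k) * ρ^k equals (1/6) * ρ^2 * (ρ+1) * (ρ/2)^m. -/
/-!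
Dividing numerator and denominator by `2 ^ n`, the sum becomes the convolution
`∑ (S j / 2 ^ j) (ρ / 2) ^ k` of a sequence tending to `1 / 9` with a geometric sequence of ratio
`|ρ / 2| < 1`; by dominated convergence it tends to `(1 / 9) ∑_{k > m} (ρ / 2) ^ k`, while
`(V n - 2) / 2 ^ n → 2 / 3`. The cubic equation turns the quotient into the stated closed form.
-/

open Filter Finset Topology

theorem tendsto_sum_range_mul_of_tendsto_of_summable {R : Type*} [NormedRing R] [CompleteSpace R]
    {a g : ℕ → R} {L : R} (ha : Tendsto a atTop (𝓝 L)) (hg : Summable fun k => ‖g k‖) :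
    Tendsto (fun n => ∑ k ∈ range (n + 1), a (n - k) * g k) atTop (𝓝 (L * ∑' k, g k)) := by
  obtain ⟨C, hC⟩ := isBounded_iff_forall_norm_le.1 (Metric.isBounded_range_of_tendsto a ha)
  let f : ℕ → ℕ → R := fun n k => if k ≤ n then a (n - k) * g k else 0
  have hf_tsum (n : ℕ) : ∑' k, f n k = ∑ k ∈ range (n + 1), a (n - k) * g k := by
    rw [tsum_eq_sum (s := range (n + 1)) fun k hk => if_neg (by simpa [Nat.lt_succ_iff] using hk)]
    exact sum_congr rfl fun k hk => if_pos (Nat.lt_succ_iff.1 (mem_range.1 hk))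
  have hf_lim (k : ℕ) : Tendsto (f · k) atTop (𝓝 (L * g k)) := by
    refine ((ha.comp (tendsto_sub_atTop_nat k)).mul_const (g k)).congr' ?_
    filter_upwards [eventually_ge_atTop k] with n hn using (if_pos hn).symm
  have hf_bound : ∀ n k, ‖f n k‖ ≤ C * ‖g k‖ := by
    intro n k
    by_cases hk : k ≤ n
    · simp only [f, if_pos hk]
      exact (norm_mul_le _ _).trans
        (mul_le_mul_of_nonneg_right (hC _ (Set.mem_range_self _)) (norm_nonneg _))
    · simp only [f, if_neg hk, norm_zero]
      exact mul_nonneg ((norm_nonneg _).trans (hC _ (Set.mem_range_self 0))) (norm_nonneg _)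
  have := tendsto_tsum_of_dominated_convergence (hg.mul_left C) hf_lim (.of_forall hf_bound)
  rw [(hg.of_norm).tsum_mul_left] at this
  simpa only [hf_tsum] using this

theorem tendsto_sum_Icc_mul_geometric {a : ℕ → ℝ} {L x : ℝ} (ha : Tendsto a atTop (𝓝 L))
    (hx : |x| < 1) (m : ℕ) :
    Tendsto (fun n => ∑ k ∈ Icc (m + 1) n, a (n - k) * x ^ k) atTop
      (𝓝 (L * (x ^ (m + 1) / (1 - x)))) := by
  set g : ℕ → ℝ := fun k => if m < k then x ^ k else 0
  have hg : Summable fun k => ‖g k‖ := by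
    refine (summable_geometric_of_abs_lt_one hx).abs.of_nonneg_of_le (fun _ => norm_nonneg _) ?_
    intro k
    simp only [g, Real.norm_eq_abs, abs_pow]
    split_ifs <;> simp
  have hg_tsum : ∑' k, g k = x ^ (m + 1) / (1 - x) := by
    rw [← hg.of_norm.sum_add_tsum_nat_add (m + 1),
      sum_eq_zero fun k hk => if_neg (by simpa [Nat.lt_succ_iff] using hk)]
    have hshift (k : ℕ) : g (k + (m + 1)) = x ^ (m + 1) * x ^ k := by
      simp only [g, if_pos (by omega : m < k + (m + 1)), pow_add, mul_comm]
    simp only [hshift, tsum_mul_left, tsum_geometric_of_abs_lt_one hx, zero_add, div_eq_mul_inv]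
  have hsum (n : ℕ) :
      ∑ k ∈ range (n + 1), a (n - k) * g k = ∑ k ∈ Icc (m + 1) n, a (n - k) * x ^ k := by
    simp only [g, mul_ite, mul_zero, ← sum_filter]
    congr 1
    ext k
    simp only [mem_filter, mem_range, mem_Icc]
    omega
  rw [← hg_tsum]
  simpa only [hsum] using tendsto_sum_range_mul_of_tendsto_of_summable ha hg

theorem abs_lt_two_of_cubic_eq_zero {ρ : ℝ} (hρ : ρ ^ 3 - ρ ^ 2 - 2 * ρ + 1 = 0) :
    |ρ| < 2 :=
  abs_lt.2 ⟨by nlinarith [sq_nonneg ρ, sq_nonneg (ρ + 1)],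
    by nlinarith [sq_nonneg (ρ - 1), sq_nonneg ρ]⟩

theorem tendsto_half_pow_and_neg_half_pow :
    Tendsto (fun n : ℕ => (1 / 2 : ℝ) ^ n) atTop (𝓝 0) ∧
      Tendsto (fun n : ℕ => (-1 / 2 : ℝ) ^ n) atTop (𝓝 0) ∧
      Tendsto (fun n : ℕ => (n : ℝ) * (-1 / 2 : ℝ) ^ n) atTop (𝓝 0) := by
  have h : |(-1 / 2 : ℝ)| < 1 := by norm_num [abs_of_neg]
  refine ⟨tendsto_pow_atTop_nhds_zero_of_abs_lt_one (by norm_num [abs_of_pos]),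
    tendsto_pow_atTop_nhds_zero_of_abs_lt_one h, ?_⟩
  simpa using tendsto_pow_const_mul_const_pow_of_abs_lt_one 1 h

theorem tendsto_S_div_two_pow {S : ℕ → ℝ}
    (hS : ∀ n : ℕ, S n = (9 + 23 * (-1 : ℝ) ^ n + 2 ^ (2 + n) - 6 * n * (-1 : ℝ) ^ n) / 36) :
    Tendsto (fun n => S n / 2 ^ n) atTop (𝓝 (1 / 9)) := by
  obtain ⟨h1, h2, h3⟩ := tendsto_half_pow_and_neg_half_pow
  have := ((h1.const_mul (1 / 4)).add
    ((h2.const_mul (23 / 36)).sub (h3.const_mul (1 / 6)))).const_add (1 / 9)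
  simp only [mul_zero, sub_zero, add_zero] at this
  refine this.congr fun n => ?_
  rw [hS, div_pow, div_pow, one_pow, pow_add]
  field_simp
  ring

theorem tendsto_V_sub_two_div_two_pow {V : ℕ → ℝ}
    (hV : ∀ n : ℕ, V n = (2 ^ (2 + n) + (-1 : ℝ) ^ (1 + n) + 9) / 6) :
    Tendsto (fun n => (V n - 2) / 2 ^ n) atTop (𝓝 (2 / 3)) := by
  obtain ⟨h1, h2, -⟩ := tendsto_half_pow_and_neg_half_pow
  have := ((h1.const_mul (1 / 2)).add (h2.const_mul (1 / 6))).const_sub (2 / 3)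
  simp only [mul_zero, sub_zero, add_zero] at this
  refine this.congr fun n => ?_
  rw [hV, div_pow, div_pow, one_pow, pow_add, pow_add]
  field_simp
  ring

theorem stmt_5 (ρ : ℝ) (hρ : ρ ^ 3 - ρ ^ 2 - 2 * ρ + 1 = 0) (S V : ℕ → ℝ)
    (hS : ∀ n : ℕ, S n = (9 + 23 * (-1 : ℝ) ^ n + 2 ^ (2 + n) - 6 * n * (-1 : ℝ) ^ n) / 36)
    (hV : ∀ n : ℕ, V n = (2 ^ (2 + n) + (-1 : ℝ) ^ (1 + n) + 9) / 6)
    (m : ℕ) :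
    Filter.Tendsto
      (fun n : ℕ => (1 / (V n - 2)) * ∑ k ∈ Finset.Icc (m + 1) n, S (n - k) * ρ ^ k)
      Filter.atTop
      (nhds ((1 / 6) * ρ ^ 2 * (ρ + 1) * (ρ / 2) ^ m)) := by
  have hρ2 : |ρ| < 2 := abs_lt_two_of_cubic_eq_zero hρ
  have hx : |ρ / 2| < 1 := by rw [abs_div, abs_two]; linarith
  have hlim := (tendsto_sum_Icc_mul_geometric (tendsto_S_div_two_pow hS) hx m).div
    (tendsto_V_sub_two_div_two_pow hV) (by norm_num)
  convert hlim using 2 with n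
  · have hterm : ∀ k ∈ Icc (m + 1) n,
        S (n - k) / 2 ^ (n - k) * (ρ / 2) ^ k = S (n - k) * ρ ^ k / 2 ^ n := by
      intro k hk
      rw [div_pow, ← Nat.sub_add_cancel (mem_Icc.1 hk).2, pow_add, Nat.add_sub_cancel]
      field_simp
    rw [Pi.div_apply, sum_congr rfl hterm, ← sum_div,
      div_div_div_cancel_right₀ (by positivity), one_div_mul_eq_div]
  · have h2ρ : 2 - ρ ≠ 0 := by linarith [(abs_lt.1 hρ2).2]
    rw [pow_succ]
    field_simp
    -- `ρ / (2 - ρ) = ρ ^ 2 * (ρ + 1)` is `ρ` times the cubic equation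
    linear_combination (-9 * ρ * (ρ / 2) ^ m) * hρ
end

section
/- Let (ζ_n) be real numbers satisfying the recursion ζ_{n} - 2 = (1 + 2/ζ_{n-1})(ζ_{n-2}^2 - 4) with all terms nonzero. Suppose ζ_{j+1} > 2 and ζ_j = 2 - δ with 0 < δ < 2. Then ζ_{j+2} < 2 - 2δ. -/
theorem stmt_8 (ζ : ℕ → ℝ) (hnz : ∀ k, ζ k ≠ 0)
    (hrec : ∀ n : ℕ, 2 ≤ n → ζ n - 2 = (1 + 2 / ζ (n - 1)) * (ζ (n - 2) ^ 2 - 4))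
    (j : ℕ) (δ : ℝ) (hδ0 : 0 < δ) (hδ2 : δ < 2)
    (hj1 : ζ (j + 1) > 2) (hj : ζ j = 2 - δ) :
    ζ (j + 2) < 2 - 2 * δ := by
  have h := hrec (j + 2) (by omega)
  simp only [Nat.add_sub_cancel, show j + 2 - 1 = j + 1 from rfl] at h
  rw [hj] at h
  have hpos : 0 < 2 / ζ (j + 1) := by positivity
  nlinarith [mul_pos hpos (mul_pos hδ0 (by linarith : (0:ℝ) < 4 - δ))]
end
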